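/- Let u : ℝ² → ℝ² be C², globally Lipschitz, with divergence ∇·u, and let x̄ : ℝ → ℝ² solve x̄′(p) = u(x̄(p)) with u(x̄(p)) ≠ 0 for every p. Fix p^u < p^d and suppose (closed-interface condition) x̄ is periodic with period p^d − p^u, so a := x̄(p^u) = x̄(p^d) =: b, and that w(a,t) = 0 for all t. Define M^d_ε(p,t) := −ε ∫_{p}^{p^d} exp(∫_τ^p (∇·u)(x̄(ξ)) dξ) ⟨J u(x̄(τ)), w(x̄(τ), τ + t − p)⟩ dτ for all p ∈ ℝ. Then for every P > 0 there exist C > 0 and ε₀ > 0 such that for all p ∈ [−P, P], all t ∈ ℝ, and all ε ∈ (0, ε₀], |⟨x_ε^d(p,t) − x̄(p), n̂(p)⟩ − M^d_ε(p,t)/|u(x̄(p))|| ≤ C ε². -/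

import Mathlib

open scoped InnerProductSpace NNReal

noncomputable section

/-- The plane with its Euclidean inner product. -/
abbrev E2 : Type := EuclideanSpace ℝ (Fin 2)

/-- Rotation by +π/2 : J(x₁,x₂) = (−x₂, x₁). -/
noncomputable def Jrot : E2 → E2 :=
  fun x => (WithLp.equiv 2 (Fin 2 → ℝ)).symm ![-(x 1), x 0]

/-- Divergence of a planar vector field, as the trace of its Fréchet derivative. -/
noncomputable def div2 (u : E2 → E2) (x : E2) : ℝ :=
  LinearMap.trace ℝ E2 (fderiv ℝ u x).toLinearMap

/-- The leading-order downstream streakline displacement function (closed interface). -/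
noncomputable def MdClosed (u : E2 → E2) (xbar : ℝ → E2) (w : E2 → ℝ → E2)
    (pd ε p t : ℝ) : ℝ :=
  -(ε * ∫ τ in p..pd,
    Real.exp (∫ ξ in τ..p, div2 u (xbar ξ)) *
      ⟪Jrot (u (xbar τ)), w (xbar τ) (τ + t - p)⟫_ℝ)

/-!
Put `δ(τ) = X(τ + t - p) - x̄(τ)`, which vanishes at `τ = p^d`. In the plane
`⟪J a, A b⟫ + ⟪J (A a), b⟫ = (tr A) ⟪J a, b⟫`, so the normal component `m = ⟪J u(x̄), δ⟫` solves
the scalar linear equation `m' = (∇·u)(x̄) m + ⟪J u(x̄), δ' - Du(x̄) δ⟫`. Integrating it with the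
factor `exp ∫ (∇·u)(x̄)` from `p^d` back to `p` writes `m(p)` as `M^d_ε(p,t)` plus the integral
of the remainder `u(x̄ + δ) - u(x̄) - Du(x̄) δ + ε (w(x̄ + δ, ·) - w(x̄, ·))`. Grönwall gives
`δ = O(ε)` uniformly for bounded `p`, hence the remainder is `O(ε²)`; finally `|u(x̄(p))|` is
bounded below on `[-P, P]`.
-/

open Set Metric Real intervalIntegral Bornology

@[simp] lemma Jrot_apply_zero (x : E2) : Jrot x 0 = -x 1 := rfl

@[simp] lemma Jrot_apply_one (x : E2) : Jrot x 1 = x 0 := rfl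

def JrotL : E2 →L[ℝ] E2 :=
  LinearMap.toContinuousLinearMap
    { toFun := Jrot
      map_add' := fun x y => by ext i; fin_cases i <;> simp [add_comm]
      map_smul' := fun c x => by ext i; fin_cases i <;> simp }

@[fun_prop] lemma continuous_Jrot : Continuous Jrot := JrotL.continuous

lemma norm_Jrot (x : E2) : ‖Jrot x‖ = ‖x‖ := by
  simp [EuclideanSpace.norm_eq, Fin.sum_univ_two, add_comm]

lemma trace_eq_apply_add_apply (A : E2 →ₗ[ℝ] E2) :
    LinearMap.trace ℝ E2 A =
      A (EuclideanSpace.single 0 1) 0 + A (EuclideanSpace.single 1 1) 1 := by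
  rw [LinearMap.trace_eq_matrix_trace ℝ (EuclideanSpace.basisFun (Fin 2) ℝ).toBasis]
  simp [Matrix.trace, LinearMap.toMatrix_apply, Fin.sum_univ_two]

lemma inner_Jrot_apply_add_inner_Jrot_apply (A : E2 →ₗ[ℝ] E2) (a b : E2) :
    ⟪Jrot a, A b⟫_ℝ + ⟪Jrot (A a), b⟫_ℝ = LinearMap.trace ℝ E2 A * ⟪Jrot a, b⟫_ℝ := by
  have hA : ∀ x : E2,
      A x = x 0 • A (EuclideanSpace.single 0 1) + x 1 • A (EuclideanSpace.single 1 1) := by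
    intro x
    rw [← map_smul, ← map_smul, ← map_add]
    congr 1
    ext i; fin_cases i <;> simp
  rw [trace_eq_apply_add_apply, hA a, hA b]
  simp [PiLp.inner_apply, Fin.sum_univ_two]
  ring

lemma continuous_div2 {u : E2 → E2} (hu : ContDiff ℝ 1 u) : Continuous (div2 u) :=
  ((LinearMap.trace ℝ E2).comp (ContinuousLinearMap.coeLM ℝ)).continuous_of_finiteDimensional.comp
    (hu.continuous_fderiv one_ne_zero)

lemma IsCompact.exists_pos_bound_of_continuousOn {α F : Type*} [TopologicalSpace α]
    [NormedAddCommGroup F] {s : Set α} (hs : IsCompact s) {f : α → F} (hf : ContinuousOn f s) :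
    ∃ C > 0, ∀ x ∈ s, ‖f x‖ ≤ C :=
  let ⟨C, hC, hbound⟩ := (hs.image_of_continuousOn hf).isBounded.exists_pos_norm_le
  ⟨C, hC, fun _ hx => hbound _ (mem_image_of_mem f hx)⟩

lemma exp_integral_le_exp_mul_abs {f : ℝ → ℝ} {a b D : ℝ} (hf : ∀ ξ ∈ uIcc a b, ‖f ξ‖ ≤ D) :
    exp (∫ ξ in a..b, f ξ) ≤ exp (D * |b - a|) :=
  exp_le_exp.2 <| (Real.le_norm_self _).trans <|
    norm_integral_le_of_norm_le_const fun ξ hξ => hf ξ (uIoc_subset_uIcc hξ)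

section Gronwall

variable {E : Type*} [NormedAddCommGroup E] [NormedSpace ℝ E]

lemma gronwallBound_zero_mul (K c ε x : ℝ) :
    gronwallBound 0 K (c * ε) x = c * gronwallBound 0 K ε x := by
  unfold gronwallBound; split_ifs <;> ring

theorem norm_le_gronwallBound_of_norm_deriv_le {f f' : ℝ → E} {δ K ε a : ℝ}
    (hf : ∀ x, HasDerivAt f (f' x) x) (ha : ‖f a‖ ≤ δ)
    (bound : ∀ x, ‖f' x‖ ≤ K * ‖f x‖ + ε) (x : ℝ) :
    ‖f x‖ ≤ gronwallBound δ K ε |x - a| := by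
  rcases le_total a x with hax | hxa
  · rw [abs_of_nonneg (sub_nonneg.2 hax)]
    exact norm_le_gronwallBound_of_norm_deriv_right_le
      (fun y _ => (hf y).continuousAt.continuousWithinAt) (fun y _ => (hf y).hasDerivWithinAt)
      ha (fun y _ => bound y) x ⟨hax, le_rfl⟩
  · have hg : ∀ s, HasDerivAt (fun s => f (-s)) (-f' (-s)) s := fun s => by
      simpa [Function.comp_def] using (hf (-s)).scomp s (hasDerivAt_neg s)
    have := norm_le_gronwallBound_of_norm_deriv_right_le (f := fun s => f (-s)) (a := -a)
      (fun y _ => (hg y).continuousAt.continuousWithinAt) (fun y _ => (hg y).hasDerivWithinAt)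
      (by simpa using ha) (fun y _ => by simpa using bound (-y)) (-x) ⟨neg_le_neg hxa, le_rfl⟩
    rw [abs_of_nonpos (sub_nonpos.2 hxa)]
    simpa [neg_add_eq_sub] using this

theorem norm_sub_le_gronwallBound_of_hasDerivAt_add {v : E → E} {K : ℝ≥0}
    (hv : LipschitzWith K v) {y z f : ℝ → E} {η a : ℝ}
    (hy : ∀ s, HasDerivAt y (v (y s)) s) (hz : ∀ s, HasDerivAt z (v (z s) + f s) s)
    (hf : ∀ s, ‖f s‖ ≤ η) (ha : z a = y a) (s : ℝ) :
    ‖z s - y s‖ ≤ gronwallBound 0 K η |s - a| := by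
  refine norm_le_gronwallBound_of_norm_deriv_le (fun s => (hz s).sub (hy s)) (by simp [ha]) (fun s => ?_) s
  calc ‖v (z s) + f s - v (y s)‖ = ‖(v (z s) - v (y s)) + f s‖ := by congr 1; abel
    _ ≤ K * ‖z s - y s‖ + η := by
      refine (norm_add_le _ _).trans (add_le_add ?_ (hf s))
      simpa [dist_eq_norm] using hv.dist_le_mul (z s) (y s)

end Gronwall

section Taylor

variable {E F : Type*} [NormedAddCommGroup E] [NormedSpace ℝ E]
  [NormedAddCommGroup F] [NormedSpace ℝ F]

theorem Convex.norm_sub_sub_fderiv_le {u : E → F} (hu : ContDiff ℝ 2 u) {s : Set E}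
    (hs : Convex ℝ s) {B : ℝ} (hB : ∀ z ∈ s, ‖fderiv ℝ (fderiv ℝ u) z‖ ≤ B) {x y : E}
    (hx : x ∈ s) (hy : y ∈ s) :
    ‖u y - u x - fderiv ℝ u x (y - x)‖ ≤ B * ‖y - x‖ ^ 2 := by
  have hB0 : 0 ≤ B := (norm_nonneg (fderiv ℝ (fderiv ℝ u) x)).trans (hB x hx)
  have hDu : ∀ z ∈ s, ‖fderiv ℝ u z - fderiv ℝ u x‖ ≤ B * ‖z - x‖ := fun z hz =>
    hs.norm_image_sub_le_of_norm_hasFDerivWithin_le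
      (fun z _ => (((hu.fderiv_right (m := 1) le_rfl).differentiable one_ne_zero) z
        ).hasFDerivAt.hasFDerivWithinAt) hB hx hz
  rw [sq, ← mul_assoc]
  exact (convex_segment x y).norm_image_sub_le_of_norm_hasFDerivWithin_le'
    (fun z _ => (hu.differentiable two_ne_zero z).hasFDerivAt.hasFDerivWithinAt)
    (fun z hz => (hDu z (hs.segment_subset hx hy hz)).trans
      (mul_le_mul_of_nonneg_left (norm_sub_le_of_mem_segment hz) hB0))
    (left_mem_segment ℝ x y) (right_mem_segment ℝ x y)

theorem ContDiff.exists_norm_sub_sub_fderiv_le [ProperSpace E] {u : E → F}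
    (hu : ContDiff ℝ 2 u) {S : Set E} (hS : IsBounded S) :
    ∃ B > 0, ∀ x ∈ S, ∀ y, ‖y - x‖ ≤ 1 →
      ‖u y - u x - fderiv ℝ u x (y - x)‖ ≤ B * ‖y - x‖ ^ 2 := by
  obtain ⟨r, hr⟩ := hS.subset_closedBall 0
  obtain ⟨B, hB, hbound⟩ := (isCompact_closedBall (0 : E) (r + 1)).exists_pos_bound_of_continuousOn
    ((hu.fderiv_right (m := 1) le_rfl).continuous_fderiv one_ne_zero).continuousOn
  refine ⟨B, hB, fun x hx y hy => (convex_closedBall _ _).norm_sub_sub_fderiv_le hu hbound ?_ ?_⟩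
  · exact closedBall_subset_closedBall (by linarith) (hr hx)
  · have := mem_closedBall.1 (hr hx)
    rw [mem_closedBall, ← dist_eq_norm] at *
    linarith [dist_triangle y x 0]

def linRemainder (u : E → F) (w : E → ℝ → F) (ε : ℝ) (x y : E) (s : ℝ) : F :=
  u y - u x - fderiv ℝ u x (y - x) + ε • (w y s - w x s)

lemma norm_linRemainder_le {u : E → F} {w : E → ℝ → F} {x y : E} {s ε B C₁ : ℝ} {Kw : ℝ≥0}
    (hB : 0 ≤ B) (htaylor : ‖u y - u x - fderiv ℝ u x (y - x)‖ ≤ B * ‖y - x‖ ^ 2)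
    (hw : LipschitzWith Kw fun x => w x s) (hε : 0 ≤ ε) (hxy : ‖y - x‖ ≤ ε * C₁) :
    ‖linRemainder u w ε x y s‖ ≤ (B * C₁ ^ 2 + Kw * C₁) * ε ^ 2 := by
  have hw' : ‖w y s - w x s‖ ≤ Kw * ‖y - x‖ := by
    simpa [dist_eq_norm] using hw.dist_le_mul y x
  calc ‖linRemainder u w ε x y s‖
      ≤ ‖u y - u x - fderiv ℝ u x (y - x)‖ + ε * ‖w y s - w x s‖ := by
        rw [linRemainder]
        exact (norm_add_le _ _).trans_eq (by rw [norm_smul, Real.norm_of_nonneg hε])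
    _ ≤ B * (ε * C₁) ^ 2 + ε * (Kw * (ε * C₁)) :=
        add_le_add (htaylor.trans (by gcongr))
          (mul_le_mul_of_nonneg_left (hw'.trans (by gcongr)) hε)
    _ = (B * C₁ ^ 2 + Kw * C₁) * ε ^ 2 := by ring

end Taylor

section Streakline

variable {u : E2 → E2} {xbar : ℝ → E2} {w : E2 → ℝ → E2}

lemma hasDerivAt_inner_Jrot (hu : Differentiable ℝ u)
    (hxbar : ∀ p, HasDerivAt xbar (u (xbar p)) p) {δ : ℝ → E2} {δ' : E2} {τ : ℝ}
    (hδ : HasDerivAt δ δ' τ) :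
    HasDerivAt (fun s => ⟪Jrot (u (xbar s)), δ s⟫_ℝ)
      (⟪Jrot (u (xbar τ)), δ' - fderiv ℝ u (xbar τ) (δ τ)⟫_ℝ
        + div2 u (xbar τ) * ⟪Jrot (u (xbar τ)), δ τ⟫_ℝ) τ := by
  have hJu : HasDerivAt (fun s => Jrot (u (xbar s)))
      (Jrot (fderiv ℝ u (xbar τ) (u (xbar τ)))) τ :=
    JrotL.hasFDerivAt.comp_hasDerivAt τ ((hu _).hasFDerivAt.comp_hasDerivAt τ (hxbar τ))
  refine (hJu.inner ℝ hδ).congr_deriv ?_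
  rw [inner_sub_right, div2, ← inner_Jrot_apply_add_inner_Jrot_apply]
  simp only [ContinuousLinearMap.coe_coe]
  ring

lemma hasDerivAt_exp_integral_div2 (hu : ContDiff ℝ 1 u) (hxc : Continuous xbar) (a τ : ℝ) :
    HasDerivAt (fun s => exp (∫ ξ in s..a, div2 u (xbar ξ)))
      (exp (∫ ξ in τ..a, div2 u (xbar ξ)) * -div2 u (xbar τ)) τ :=
  have hdiv : Continuous fun ξ => div2 u (xbar ξ) := (continuous_div2 hu).comp hxc
  (integral_hasDerivAt_left (hdiv.intervalIntegrable _ _) (hdiv.stronglyMeasurableAtFilter _ _)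
    hdiv.continuousAt).exp

@[fun_prop]
lemma continuous_exp_integral_div2 (hu : ContDiff ℝ 1 u) (hxc : Continuous xbar) (a : ℝ) :
    Continuous fun s => exp (∫ ξ in s..a, div2 u (xbar ξ)) :=
  continuous_iff_continuousAt.2 fun τ => (hasDerivAt_exp_integral_div2 hu hxc a τ).continuousAt

theorem inner_Jrot_eq_neg_integral (hu : ContDiff ℝ 1 u)
    (hxbar : ∀ p, HasDerivAt xbar (u (xbar p)) p) {δ δ' : ℝ → E2}
    (hδ : ∀ τ, HasDerivAt δ (δ' τ) τ) (hδ' : Continuous δ') {a b : ℝ} (hb : δ b = 0) :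
    ⟪Jrot (u (xbar a)), δ a⟫_ℝ = -∫ τ in a..b, exp (∫ ξ in τ..a, div2 u (xbar ξ)) *
      ⟪Jrot (u (xbar τ)), δ' τ - fderiv ℝ u (xbar τ) (δ τ)⟫_ℝ := by
  have hxc : Continuous xbar := continuous_iff_continuousAt.2 fun p => (hxbar p).continuousAt
  have hδc : Continuous δ := continuous_iff_continuousAt.2 fun τ => (hδ τ).continuousAt
  have hderiv : ∀ τ, HasDerivAt
      (fun s => exp (∫ ξ in s..a, div2 u (xbar ξ)) * ⟪Jrot (u (xbar s)), δ s⟫_ℝ)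
      (exp (∫ ξ in τ..a, div2 u (xbar ξ)) *
        ⟪Jrot (u (xbar τ)), δ' τ - fderiv ℝ u (xbar τ) (δ τ)⟫_ℝ) τ := fun τ => by
    refine ((hasDerivAt_exp_integral_div2 hu hxc a τ).mul
      (hasDerivAt_inner_Jrot (hu.differentiable one_ne_zero) hxbar (hδ τ))).congr_deriv ?_
    ring
  have hDuc := hu.continuous_fderiv one_ne_zero
  have hint : Continuous fun τ => exp (∫ ξ in τ..a, div2 u (xbar ξ)) *
      ⟪Jrot (u (xbar τ)), δ' τ - fderiv ℝ u (xbar τ) (δ τ)⟫_ℝ := by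
    fun_prop
  rw [integral_eq_sub_of_hasDerivAt (fun τ _ => hderiv τ) (hint.intervalIntegrable a b)]
  simp [hb]

theorem inner_Jrot_sub_MdClosed_eq (hu : ContDiff ℝ 1 u)
    (hxbar : ∀ p, HasDerivAt xbar (u (xbar p)) p) (hw : Continuous (Function.uncurry w))
    {pd ε p t : ℝ} {X : ℝ → E2} (hX : ∀ s, HasDerivAt X (u (X s) + ε • w (X s) s) s)
    (hX0 : X (t - p + pd) = xbar pd) :
    ⟪Jrot (u (xbar p)), X t - xbar p⟫_ℝ - MdClosed u xbar w pd ε p t =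
      -∫ τ in p..pd, exp (∫ ξ in τ..p, div2 u (xbar ξ)) *
        ⟪Jrot (u (xbar τ)), linRemainder u w ε (xbar τ) (X (τ + t - p)) (τ + t - p)⟫_ℝ := by
  have hxc : Continuous xbar := continuous_iff_continuousAt.2 fun p => (hxbar p).continuousAt
  have hXc : Continuous X := continuous_iff_continuousAt.2 fun s => (hX s).continuousAt
  have hwc : ∀ {f : ℝ → E2} {g : ℝ → ℝ}, Continuous f → Continuous g →
      Continuous fun τ => w (f τ) (g τ) := fun hf hg => hw.comp (hf.prodMk hg)
  have hδ : ∀ τ, HasDerivAt (fun τ => X (τ + t - p) - xbar τ)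
      (u (X (τ + t - p)) + ε • w (X (τ + t - p)) (τ + t - p) - u (xbar τ)) τ := fun τ => by
    have := ((hX (τ + t - p)).scomp τ (((hasDerivAt_id τ).add_const t).sub_const p)).sub
      (hxbar τ)
    rwa [one_smul] at this
  have hsplit : ∀ τ, u (X (τ + t - p)) + ε • w (X (τ + t - p)) (τ + t - p) - u (xbar τ)
      - fderiv ℝ u (xbar τ) (X (τ + t - p) - xbar τ)
      = ε • w (xbar τ) (τ + t - p) + linRemainder u w ε (xbar τ) (X (τ + t - p)) (τ + t - p) := by
    intro τ; rw [linRemainder, smul_sub]; abel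
  have huc := hu.continuous
  have hDuc := hu.continuous_fderiv one_ne_zero
  have hrep := inner_Jrot_eq_neg_integral hu hxbar hδ (by fun_prop) (a := p) (b := pd)
    (by simp [show pd + t - p = t - p + pd by ring, hX0])
  rw [show p + t - p = t by ring] at hrep
  have hF1 : Continuous fun τ => exp (∫ ξ in τ..p, div2 u (xbar ξ)) *
      ⟪Jrot (u (xbar τ)), w (xbar τ) (τ + t - p)⟫_ℝ := by
    fun_prop
  have hF2 : Continuous fun τ => exp (∫ ξ in τ..p, div2 u (xbar ξ)) *
      ⟪Jrot (u (xbar τ)), linRemainder u w ε (xbar τ) (X (τ + t - p)) (τ + t - p)⟫_ℝ := by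
    unfold linRemainder
    fun_prop
  simp_rw [hsplit, inner_add_right, real_inner_smul_right, mul_add, mul_left_comm _ ε] at hrep
  rw [integral_add ((hF1.intervalIntegrable _ _).const_mul ε) (hF2.intervalIntegrable _ _),
    integral_const_mul] at hrep
  rw [hrep, MdClosed]
  ring

lemma norm_sub_le_of_hasDerivAt_agitated {K : ℝ≥0} (huLip : LipschitzWith K u)
    (hxbar : ∀ p, HasDerivAt xbar (u (xbar p)) p) {Cw : ℝ} (hwbdd : ∀ x t, ‖w x t‖ ≤ Cw)
    {pd ε p t : ℝ} (hε : 0 ≤ ε) {X : ℝ → E2} (hX : ∀ s, HasDerivAt X (u (X s) + ε • w (X s) s) s)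
    (hX0 : X (t - p + pd) = xbar pd) (τ : ℝ) :
    ‖X (τ + t - p) - xbar τ‖ ≤ ε * gronwallBound 0 K Cw |τ - pd| := by
  rw [← gronwallBound_zero_mul]
  refine norm_sub_le_gronwallBound_of_hasDerivAt_add huLip hxbar (z := fun τ => X (τ + t - p))
    (f := fun τ => ε • w (X (τ + t - p)) (τ + t - p)) (fun s => ?_) (fun s => ?_) ?_ τ
  · simpa [Function.comp_def] using
      (hX (s + t - p)).scomp s (((hasDerivAt_id s).add_const t).sub_const p)
  · rw [norm_smul, Real.norm_of_nonneg hε]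
    exact mul_le_mul_of_nonneg_left (hwbdd _ _) hε
  · simp [show pd + t - p = t - p + pd by ring, hX0]

theorem exists_norm_linRemainder_le (hu : ContDiff ℝ 2 u) {K : ℝ≥0}
    (huLip : LipschitzWith K u) (hxbar : ∀ p, HasDerivAt xbar (u (xbar p)) p) {Cw : ℝ}
    (hwbdd : ∀ x t, ‖w x t‖ ≤ Cw) {Kw : ℝ≥0} (hwLip : ∀ t, LipschitzWith Kw fun x => w x t)
    {pd R : ℝ} (hpd : pd ∈ Icc (-R) R) :
    ∃ CR ≥ (0 : ℝ), ∃ ε₀ > (0 : ℝ), ∀ ε ∈ Ioc (0 : ℝ) ε₀, ∀ p t : ℝ, ∀ X : ℝ → E2,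
      (∀ s, HasDerivAt X (u (X s) + ε • w (X s) s) s) → X (t - p + pd) = xbar pd →
      ∀ τ ∈ Icc (-R) R,
        ‖linRemainder u w ε (xbar τ) (X (τ + t - p)) (τ + t - p)‖ ≤ CR * ε ^ 2 := by
  have hxc : Continuous xbar := continuous_iff_continuousAt.2 fun p => (hxbar p).continuousAt
  have hCw : 0 ≤ Cw := (norm_nonneg _).trans (hwbdd 0 0)
  set C₁ := gronwallBound 0 K Cw (2 * R)
  have hC₁ : 0 ≤ C₁ := by
    simpa [gronwallBound_x0] using
      gronwallBound_mono le_rfl hCw K.2 (by linarith [hpd.1, hpd.2] : 0 ≤ 2 * R)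
  obtain ⟨B, hB, htaylor⟩ := hu.exists_norm_sub_sub_fderiv_le (isCompact_Icc.image hxc).isBounded
  refine ⟨B * C₁ ^ 2 + Kw * C₁, by positivity, (C₁ + 1)⁻¹, by positivity, ?_⟩
  rintro ε ⟨hε, hεε₀⟩ p t X hX hX0 τ hτ
  have hεC₁ : ε * C₁ ≤ 1 :=
    calc ε * C₁ ≤ (C₁ + 1)⁻¹ * C₁ := mul_le_mul_of_nonneg_right hεε₀ hC₁
      _ ≤ 1 := by rw [inv_mul_le_iff₀ (by positivity)]; linarith
  have hτpd : |τ - pd| ≤ 2 * R := by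
    simpa [Real.dist_eq, two_mul] using Real.dist_le_of_mem_Icc hτ hpd
  have hdev : ‖X (τ + t - p) - xbar τ‖ ≤ ε * C₁ :=
    (norm_sub_le_of_hasDerivAt_agitated huLip hxbar hwbdd hε.le hX hX0 τ).trans
      (mul_le_mul_of_nonneg_left (gronwallBound_mono le_rfl hCw K.2 hτpd) hε.le)
  exact norm_linRemainder_le hB.le (htaylor _ (mem_image_of_mem xbar hτ) _ (hdev.trans hεC₁))
    (hwLip _) hε.le hdev

theorem exists_abs_integral_linRemainder_le (hu : ContDiff ℝ 2 u) {K : ℝ≥0}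
    (huLip : LipschitzWith K u) (hxbar : ∀ p, HasDerivAt xbar (u (xbar p)) p) {Cw : ℝ}
    (hwbdd : ∀ x t, ‖w x t‖ ≤ Cw) {Kw : ℝ≥0} (hwLip : ∀ t, LipschitzWith Kw fun x => w x t)
    (pd Q : ℝ) :
    ∃ C ≥ (0 : ℝ), ∃ ε₀ > (0 : ℝ), ∀ p ∈ Icc (-Q) Q, ∀ t : ℝ, ∀ ε ∈ Ioc (0 : ℝ) ε₀,
      ∀ X : ℝ → E2, (∀ s, HasDerivAt X (u (X s) + ε • w (X s) s) s) →
        X (t - p + pd) = xbar pd →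
        |∫ τ in p..pd, exp (∫ ξ in τ..p, div2 u (xbar ξ)) *
          ⟪Jrot (u (xbar τ)), linRemainder u w ε (xbar τ) (X (τ + t - p)) (τ + t - p)⟫_ℝ|
          ≤ C * ε ^ 2 := by
  have hxc : Continuous xbar := continuous_iff_continuousAt.2 fun p => (hxbar p).continuousAt
  set R := max Q |pd|
  set I := Icc (-R) R
  have hR : 0 ≤ R := (abs_nonneg pd).trans (le_max_right _ _)
  have hpdI : pd ∈ I := abs_le.1 (le_max_right _ _)
  have hdist : ∀ a ∈ I, ∀ b ∈ I, |a - b| ≤ 2 * R := fun a ha b hb => by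
    simpa [Real.dist_eq, two_mul] using Real.dist_le_of_mem_Icc ha hb
  obtain ⟨CR, hCR, ε₀, hε₀, hrem⟩ := exists_norm_linRemainder_le hu huLip hxbar hwbdd hwLip hpdI
  obtain ⟨D, hD0, hD⟩ := (isCompact_Icc (a := -R) (b := R)).exists_pos_bound_of_continuousOn
    ((continuous_div2 (hu.of_le one_le_two)).comp hxc).continuousOn
  obtain ⟨Mu, hMu0, hMu⟩ := (isCompact_Icc (a := -R) (b := R)).exists_pos_bound_of_continuousOn
    (hu.continuous.comp hxc).continuousOn
  refine ⟨exp (D * (2 * R)) * (Mu * CR) * (2 * R), by positivity, ε₀, hε₀, ?_⟩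
  intro p hp t ε hε X hX hX0
  have hpI : p ∈ I := Icc_subset_Icc (neg_le_neg (le_max_left _ _)) (le_max_left _ _) hp
  have hintegrand : ∀ τ ∈ uIoc p pd, ‖exp (∫ ξ in τ..p, div2 u (xbar ξ)) *
      ⟪Jrot (u (xbar τ)), linRemainder u w ε (xbar τ) (X (τ + t - p)) (τ + t - p)⟫_ℝ‖
      ≤ exp (D * (2 * R)) * (Mu * (CR * ε ^ 2)) := by
    intro τ hτ
    have hτI : τ ∈ I := uIcc_subset_Icc hpI hpdI (uIoc_subset_uIcc hτ)
    have hweight : exp (∫ ξ in τ..p, div2 u (xbar ξ)) ≤ exp (D * (2 * R)) :=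
      (exp_integral_le_exp_mul_abs fun ξ hξ => hD ξ (uIcc_subset_Icc hτI hpI hξ)).trans
        (exp_le_exp.2 (by gcongr; exact hdist p hpI τ hτI))
    rw [norm_mul, Real.norm_of_nonneg (exp_pos _).le]
    refine mul_le_mul hweight ((norm_inner_le_norm _ _).trans ?_) (norm_nonneg _) (exp_pos _).le
    rw [norm_Jrot]
    exact mul_le_mul (hMu τ hτI) (hrem ε hε p t X hX hX0 τ hτI) (norm_nonneg _) hMu0.le
  calc |∫ τ in p..pd, _| ≤ exp (D * (2 * R)) * (Mu * (CR * ε ^ 2)) * |pd - p| :=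
        norm_integral_le_of_norm_le_const hintegrand
    _ ≤ exp (D * (2 * R)) * (Mu * (CR * ε ^ 2)) * (2 * R) := by
        gcongr
        exact hdist pd hpdI p hpI
    _ = exp (D * (2 * R)) * (Mu * CR) * (2 * R) * ε ^ 2 := by ring

end Streakline

theorem downstream_streakline_closed_general
    (u : E2 → E2) (hu : ContDiff ℝ 2 u)
    (K : ℝ≥0) (huLip : LipschitzWith K u)
    (xbar : ℝ → E2) (hxbar : ∀ p : ℝ, HasDerivAt xbar (u (xbar p)) p)
    (hune : ∀ p : ℝ, u (xbar p) ≠ 0)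
    (pd : ℝ)
    (w : E2 → ℝ → E2) (hw : ContDiff ℝ 1 (Function.uncurry w))
    (Cw : ℝ) (hwbdd : ∀ (x : E2) (t : ℝ), ‖w x t‖ ≤ Cw)
    (Kw : ℝ≥0) (hwLip : ∀ t : ℝ, LipschitzWith Kw (fun x => w x t)) :
    ∀ P > (0:ℝ), ∃ C > (0:ℝ), ∃ ε₀ > (0:ℝ),
      ∀ p ∈ Set.Icc (-P) P, ∀ t : ℝ, ∀ ε ∈ Set.Ioc (0:ℝ) ε₀,
        ∀ X : ℝ → E2,
          (∀ s : ℝ, HasDerivAt X (u (X s) + ε • w (X s) s) s) →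
          X (t - p + pd) = xbar pd →
          |⟪X t - xbar p, (‖u (xbar p)‖)⁻¹ • Jrot (u (xbar p))⟫_ℝ
            - MdClosed u xbar w pd ε p t / ‖u (xbar p)‖| ≤ C * ε ^ 2 := by
  intro P hP
  have hxc : Continuous xbar := continuous_iff_continuousAt.2 fun p => (hxbar p).continuousAt
  obtain ⟨C, hC, ε₀, hε₀, hbound⟩ :=
    exists_abs_integral_linRemainder_le hu huLip hxbar hwbdd hwLip pd P
  obtain ⟨p₀, -, hp₀⟩ := isCompact_Icc.exists_isMinOn (nonempty_Icc.2 (by linarith : -P ≤ P))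
    (hu.continuous.comp hxc).norm.continuousOn
  have hc : 0 < ‖u (xbar p₀)‖ := norm_pos_iff.2 (hune p₀)
  refine ⟨C / ‖u (xbar p₀)‖ + 1, by positivity, ε₀, hε₀, fun p hp t ε hε X hX hX0 => ?_⟩
  have hv : 0 < ‖u (xbar p)‖ := norm_pos_iff.2 (hune p)
  rw [real_inner_smul_right, real_inner_comm, div_eq_inv_mul, ← mul_sub,
    inner_Jrot_sub_MdClosed_eq (hu.of_le one_le_two) hxbar hw.continuous hX hX0, abs_mul, abs_neg,
    abs_of_pos (inv_pos.2 hv)]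
  calc _ ≤ ‖u (xbar p₀)‖⁻¹ * (C * ε ^ 2) :=
        mul_le_mul (inv_anti₀ hc (hp₀ hp)) (hbound p hp t ε hε X hX hX0) (abs_nonneg _)
          (inv_nonneg.2 hc.le)
    _ ≤ (C / ‖u (xbar p₀)‖ + 1) * ε ^ 2 := by
        rw [add_mul, div_eq_inv_mul, mul_assoc]
        exact le_add_of_nonneg_right (by positivity)

/-- **Downstream streakline theorem, closed interface.**  For a steady C² globally
Lipschitz planar field `u` with a nonvanishing periodic streakline `x̄` of
period `pd − pu`, and a bounded C¹ agitation `w` vanishing at the anchor point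
`a = x̄(pu) = x̄(pd) = b`, the normal displacement of the agitated downstream
streakline `x_ε^d(p,t)` from `x̄(p)` equals `M^d_ε(p,t)/|u(x̄(p))|` up to an
error of order `ε²`, uniformly for `p ∈ [−P,P]` and `t ∈ ℝ`. -/
theorem downstream_streakline_closed
    (u : E2 → E2) (hu : ContDiff ℝ 2 u)
    (K : ℝ≥0) (huLip : LipschitzWith K u)
    (xbar : ℝ → E2) (hxbar : ∀ p : ℝ, HasDerivAt xbar (u (xbar p)) p)
    (hune : ∀ p : ℝ, u (xbar p) ≠ 0)
    (pu pd : ℝ) (hpp : pu < pd)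
    (hper : Function.Periodic xbar (pd - pu))
    (w : E2 → ℝ → E2) (hw : ContDiff ℝ 1 (Function.uncurry w))
    (Cw : ℝ) (hwbdd : ∀ (x : E2) (t : ℝ), ‖w x t‖ ≤ Cw)
    (Kw : ℝ≥0) (hwLip : ∀ t : ℝ, LipschitzWith Kw (fun x => w x t))
    (hanchor : ∀ t : ℝ, w (xbar pu) t = 0) :
    ∀ P > (0:ℝ), ∃ C > (0:ℝ), ∃ ε₀ > (0:ℝ),
      ∀ p ∈ Set.Icc (-P) P, ∀ t : ℝ, ∀ ε ∈ Set.Ioc (0:ℝ) ε₀,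
        ∀ X : ℝ → E2,
          (∀ s : ℝ, HasDerivAt X (u (X s) + ε • w (X s) s) s) →
          X (t - p + pd) = xbar pd →
          |⟪X t - xbar p, (‖u (xbar p)‖)⁻¹ • Jrot (u (xbar p))⟫_ℝ
            - MdClosed u xbar w pd ε p t / ‖u (xbar p)‖| ≤ C * ε ^ 2 :=
  downstream_streakline_closed_general u hu K huLip xbar hxbar hune pd w hw Cw hwbdd Kw hwLip
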